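/- Steinitz exchange theorem for dependence spaces: if A is a basis of a dependence space S and B is an independent subset of S, then there exists a subset A' of A such that B ∪ (A \ A') is also a basis of S. -/

import Mathlib

variable {α : Type*}

/-- A set is dependent if it contains a directly dependent (finite) set. -/
def Dep (Δ : Set (Finset α)) (A : Set α) : Prop :=
  ∃ D ∈ Δ, (D : Set α) ⊆ A

/-- A set is independent if it is not dependent. -/
def Indep (Δ : Set (Finset α)) (A : Set α) : Prop := ¬ Dep Δ A

/-- `x` depends on `A`: `x ∈ A`, or there are distinct `x₀ = x, x₁, …, xₙ` with
`x₁, …, xₙ ∈ A` and `{x₀, …, xₙ} ∈ Δ` (encoded via a finset `D`). -/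
def DSDependsOn (Δ : Set (Finset α)) (x : α) (A : Set α) : Prop :=
  x ∈ A ∨ ∃ D ∈ Δ, x ∈ D ∧ ((D : Set α) \ {x}) ⊆ A

/-- Transitivity axiom of a dependence space. -/
def TransAxiom (Δ : Set (Finset α)) : Prop :=
  ∀ (x : α) (A B : Set α), DSDependsOn Δ x A → (∀ a ∈ A, DSDependsOn Δ a B) →
    DSDependsOn Δ x B

/-- A basis: an independent set on which every element depends. -/
def IsBasis (Δ : Set (Finset α)) (A : Set α) : Prop :=
  Indep Δ A ∧ ∀ x : α, DSDependsOn Δ x A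

theorem steinitz_exchange (Δ : Set (Finset α))
    (hcard : ∀ D ∈ Δ, 2 ≤ D.card) (htrans : TransAxiom Δ)
    (A B : Set α) (hA : IsBasis Δ A) (hB : Indep Δ B) :
    ∃ A' ⊆ A, IsBasis Δ (B ∪ (A \ A')) := by
  -- Zorn's lemma on independent sets X with B ⊆ X ⊆ A ∪ B
  obtain ⟨X, -, ⟨hXindep, hBX, hXAB⟩, hXmax⟩ :=
    zorn_subset_nonempty {X : Set α | Indep Δ X ∧ B ⊆ X ∧ X ⊆ A ∪ B}
      (fun c hc hchain hne => by
        refine ⟨⋃₀ c, ⟨?_, ?_, ?_⟩, fun s hs => Set.subset_sUnion_of_mem hs⟩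
        · rintro ⟨D, hD, hDsub⟩
          rw [Set.sUnion_eq_biUnion] at hDsub
          obtain ⟨i, hic, hDi⟩ :=
            DirectedOn.exists_mem_subset_of_finset_subset_biUnion hne
              (hchain.directedOn) hDsub
          exact (hc hic).1 ⟨D, hD, hDi⟩
        · obtain ⟨s, hs⟩ := hne
          exact (hc hs).2.1.trans (Set.subset_sUnion_of_mem hs)
        · exact Set.sUnion_subset fun s hs => (hc hs).2.2) B ⟨hB, le_refl B, Set.subset_union_right⟩
  refine ⟨A \ X, Set.diff_subset, ?_, ?_⟩
  · -- B ∪ (A \ (A \ X)) = X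
    have hXeq : B ∪ (A \ (A \ X)) = X := by
      ext x
      simp only [Set.mem_union, Set.mem_diff, not_and, not_not]
      constructor
      · rintro (h | ⟨hxA, h⟩)
        · exact hBX h
        · exact h hxA
      · intro hx
        rcases hXAB hx with hA | hB'
        · exact Or.inr ⟨hA, fun _ => hx⟩
        · exact Or.inl hB'
    rw [hXeq]; exact hXindep
  · -- every x depends on B ∪ (A \ (A \ X)) = X
    have hXeq : B ∪ (A \ (A \ X)) = X := by
      ext x
      simp only [Set.mem_union, Set.mem_diff, not_and, not_not]
      constructor
      · rintro (h | ⟨hxA, h⟩)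
        · exact hBX h
        · exact h hxA
      · intro hx
        rcases hXAB hx with hA | hB'
        · exact Or.inr ⟨hA, fun _ => hx⟩
        · exact Or.inl hB'
    rw [hXeq]
    -- first: every a ∈ A depends on X
    have hAdep : ∀ a ∈ A, DSDependsOn Δ a X := by
      intro a haA
      by_cases haX : a ∈ X
      · exact Or.inl haX
      · -- X ∪ {a} is dependent by maximality
        have hdep : Dep Δ (insert a X) := by
          by_contra hindep
          exact haX (hXmax ⟨hindep, hBX.trans (Set.subset_insert a X),
              Set.insert_subset (Or.inl haA) hXAB⟩ (Set.subset_insert a X)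
              (Set.mem_insert a X))
        obtain ⟨D, hD, hDsub⟩ := hdep
        have haD : a ∈ D := by
          by_contra haD
          exact hXindep ⟨D, hD, fun y hy => by
            rcases hDsub hy with h | h
            · exact absurd (h ▸ hy) haD
            · exact h⟩
        refine Or.inr ⟨D, hD, haD, fun y hy => ?_⟩
        obtain ⟨hyD, hya⟩ := hy
        rcases hDsub hyD with h | h
        · exact absurd h hya
        · exact h
    intro x
    exact htrans x A X (hA.2 x) hAdep
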